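/- arXiv:2106.09673 — 3 statements merged into one kernel-verified Lean document; each statement's English description precedes it below -/
import Mathlib

section
/- Let Γ be a countably infinite group, let k, ℓ ≥ 1, and let π : Free(k^Γ) → ℓ^Γ be a continuous Γ-equivariant map. Then either π is constant and Stab(π) = Γ, or else Stab(π) is a finite normal subgroup of Γ. -/
open scoped Pointwise
section ShiftDefs

variable {Γ : Type} [Group Γ] {A B : Type*}

/-- The Bernoulli shift action of `Γ`: `(γ · x)(δ) = x(δγ)`. -/
def shiftAct (γ : Γ) (x : Γ → A) : Γ → A := fun δ => x (δ * γ)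

/-- The free part of the shift `Γ ↷ (Γ → A)`. -/
def freePart (Γ : Type) [Group Γ] (A : Type*) : Set (Γ → A) :=
  {x | ∀ γ : Γ, shiftAct γ x = x → γ = 1}

/-- A subshift: a closed shift-invariant subset. -/
def IsSubshift [TopologicalSpace A] (S : Set (Γ → A)) : Prop :=
  IsClosed S ∧ ∀ γ : Γ, ∀ x ∈ S, shiftAct γ x ∈ S

/-- A subshift of finite type: `⋂ γ (γ · C)` for some clopen `C`. -/
def IsSFT [TopologicalSpace A] (S : Set (Γ → A)) : Prop :=
  ∃ C : Set (Γ → A), IsClopen C ∧ S = ⋂ γ : Γ, shiftAct γ ⁻¹' C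

/-- The stabilizer of a point under the shift action. -/
def ptStab (x : Γ → A) : Set Γ := {γ | shiftAct γ x = x}

/-- `Stab(π)`: elements fixing every point in the image of `π` (domain `dom`). -/
def mapStab (π : (Γ → A) → (Γ → B)) (dom : Set (Γ → A)) : Set Γ :=
  {γ | ∀ x ∈ dom, shiftAct γ (π x) = π x}

/-- `Γ`-equivariance of `π` on the set `dom`. -/
def EquivariantOn (π : (Γ → A) → (Γ → B)) (dom : Set (Γ → A)) : Prop :=
  ∀ x ∈ dom, ∀ γ : Γ, π (shiftAct γ x) = shiftAct γ (π x)

/-- `Col(F, ℓ)`: proper `ℓ`-colorings of the Cayley graph `G(Γ, F)`. -/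
def properCol (F : Finset Γ) (ℓ : ℕ) : Set (Γ → Fin ℓ) :=
  {x | ∀ γ : Γ, ∀ σ ∈ F, x γ ≠ x (σ * γ)}

end ShiftDefs

/-!
`Stab(π)` is a subgroup, normal because `π` is equivariant and the free part is shift-invariant.
If it is infinite, `π` is constant. By continuity `π x 1` depends only on `x` restricted to a
finite window. Given free `x`, `y` with windows `Wx`, `Wy`, choose `γ ∈ Stab(π)` such that `Wy γ`
misses `Wx`. The free part is a countable intersection of open dense sets, hence dense by Baire,
so some free `z` agrees with `x` on `Wx` and with `γ⁻¹ · y` on `Wy γ`; then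
`π x 1 = π z 1 = π (γ · z) 1 = π y 1`. Equivariance turns this into `π x = π y`.
When `k ≤ 1` the free part is empty.
-/

open Topology

section ShiftAction

variable {Γ : Type} [Group Γ] {A B : Type*}

@[simp]
lemma shiftAct_shiftAct (γ δ : Γ) (x : Γ → A) :
    shiftAct γ (shiftAct δ x) = shiftAct (γ * δ) x := by
  funext η
  simp [shiftAct, mul_assoc]

@[simp]
lemma shiftAct_one (x : Γ → A) : shiftAct (1 : Γ) x = x := by
  funext η
  simp [shiftAct]

lemma shiftAct_apply_one (γ : Γ) (x : Γ → A) : shiftAct γ x 1 = x γ := by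
  simp [shiftAct]

lemma shiftAct_mem_freePart {x : Γ → A} (hx : x ∈ freePart Γ A) (γ : Γ) :
    shiftAct γ x ∈ freePart Γ A := by
  intro δ hδ
  have hconj : shiftAct (γ⁻¹ * δ * γ) x = x := by
    rw [← shiftAct_shiftAct, ← shiftAct_shiftAct, hδ, shiftAct_shiftAct, inv_mul_cancel,
      shiftAct_one]
  calc δ = γ * (γ⁻¹ * δ * γ) * γ⁻¹ := by group
    _ = 1 := by rw [hx _ hconj]; group

lemma freePart_eq_empty [Nontrivial Γ] [Subsingleton A] : freePart Γ A = ∅ := by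
  refine Set.eq_empty_of_forall_notMem fun x hx => ?_
  obtain ⟨γ, hγ⟩ := exists_ne (1 : Γ)
  exact hγ (hx γ (Subsingleton.elim _ _))

def mapStabSubgroup (π : (Γ → A) → (Γ → B)) (dom : Set (Γ → A)) : Subgroup Γ where
  carrier := mapStab π dom
  one_mem' _ _ := shiftAct_one _
  mul_mem' {a b} ha hb x hx := by
    rw [← shiftAct_shiftAct, hb x hx, ha x hx]
  inv_mem' {a} ha x hx := by
    conv_lhs => rw [← ha x hx]
    simp

lemma mapStabSubgroup_normal {π : (Γ → A) → (Γ → B)}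
    (hπ : EquivariantOn π (freePart Γ A)) : (mapStabSubgroup π (freePart Γ A)).Normal where
  conj_mem a ha g x hx := by
    have hx' := shiftAct_mem_freePart hx g⁻¹
    calc shiftAct (g * a * g⁻¹) (π x)
        = shiftAct g (shiftAct a (π (shiftAct g⁻¹ x))) := by
          rw [hπ x hx g⁻¹, shiftAct_shiftAct, shiftAct_shiftAct]
      _ = π x := by
          rw [ha _ hx', ← hπ _ hx' g, shiftAct_shiftAct, mul_inv_cancel, shiftAct_one]

lemma mapStab_eq_univ_of_forall_eq {π : (Γ → A) → (Γ → B)}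
    (hπ : EquivariantOn π (freePart Γ A))
    (hconst : ∀ x ∈ freePart Γ A, ∀ y ∈ freePart Γ A, π x = π y) :
    mapStab π (freePart Γ A) = Set.univ :=
  Set.eq_univ_of_forall fun γ x hx => by
    rw [← hπ x hx γ]
    exact hconst _ (shiftAct_mem_freePart hx γ) _ hx

end ShiftAction

section Cylinders

variable {Γ A : Type*} [TopologicalSpace A]

lemma exists_finset_cylinder_subset {x : Γ → A} {U : Set (Γ → A)} (hU : U ∈ 𝓝 x) :
    ∃ F : Finset Γ, ∀ z : Γ → A, (∀ δ ∈ F, z δ = x δ) → z ∈ U := by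
  rw [nhds_pi, Filter.mem_pi] at hU
  obtain ⟨I, hI, t, ht, hIt⟩ := hU
  refine ⟨hI.toFinset, fun z hz => hIt fun δ hδ => ?_⟩
  rw [hz δ (hI.mem_toFinset.2 hδ)]
  exact mem_of_mem_nhds (ht δ)

lemma isOpen_cylinder [DiscreteTopology A] (F : Finset Γ) (w : Γ → A) :
    IsOpen {z : Γ → A | ∀ δ ∈ F, z δ = w δ} := by
  simpa [Set.pi] using isOpen_set_pi F.finite_toSet fun δ _ => isOpen_discrete {w δ}

end Cylinders

section FreePart

variable {Γ : Type} [Group Γ] {A B : Type*} [TopologicalSpace A]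

lemma isOpen_setOf_shiftAct_ne [T2Space A] (γ : Γ) :
    IsOpen {x : Γ → A | shiftAct γ x ≠ x} :=
  isOpen_ne_fun (continuous_pi fun δ => continuous_apply (δ * γ)) continuous_id

lemma dense_setOf_shiftAct_ne [Infinite Γ] [Nontrivial A] {γ : Γ} (hγ : γ ≠ 1) :
    Dense {x : Γ → A | shiftAct γ x ≠ x} := by
  classical
  refine fun x => mem_closure_iff_nhds.2 fun U hU => ?_
  obtain ⟨F, hF⟩ := exists_finset_cylinder_subset hU
  obtain ⟨δ, hδ⟩ := Infinite.exists_notMem_finset F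
  obtain ⟨a, ha⟩ := exists_ne (x (δ * γ))
  have hδγ : δ * γ ≠ δ := by simpa using hγ
  refine ⟨Function.update x δ a, hF _ fun η hη => ?_, fun h => ?_⟩
  · exact Function.update_of_ne (ne_of_mem_of_not_mem hη hδ) _ _
  · have := congrFun h δ
    simp only [shiftAct, Function.update_self, Function.update_of_ne hδγ] at this
    exact ha this.symm

lemma dense_freePart [Countable Γ] [Infinite Γ] [Countable A] [Nontrivial A]
    [DiscreteTopology A] : Dense (freePart Γ A) := by
  have hfree : freePart Γ A = ⋂ γ : {γ : Γ // γ ≠ 1}, {x | shiftAct γ.1 x ≠ x} := by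
    ext x
    simp only [freePart, Set.mem_ofPred_eq, Set.mem_iInter, Subtype.forall]
    exact forall_congr' fun γ => not_imp_not.symm
  rw [hfree]
  exact dense_iInter_of_isOpen (fun γ => isOpen_setOf_shiftAct_ne γ.1)
    fun γ => dense_setOf_shiftAct_ne γ.2

lemma exists_mem_freePart_forall_eq [Countable Γ] [Infinite Γ] [Countable A] [Nontrivial A]
    [DiscreteTopology A] (F : Finset Γ) (w : Γ → A) : ∃ z ∈ freePart Γ A, ∀ δ ∈ F, z δ = w δ := by
  obtain ⟨z, hzF, hz⟩ :=
    dense_freePart.inter_open_nonempty _ (isOpen_cylinder F w) ⟨w, fun _ _ => rfl⟩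
  exact ⟨z, hz, hzF⟩

lemma ContinuousOn.exists_finset_apply_one_eq [TopologicalSpace B] [DiscreteTopology B]
    {π : (Γ → A) → (Γ → B)} {D : Set (Γ → A)} (hπ : ContinuousOn π D) {x : Γ → A}
    (hx : x ∈ D) : ∃ W : Finset Γ, ∀ z ∈ D, (∀ δ ∈ W, z δ = x δ) → π z 1 = π x 1 := by
  have hloc : {z | z ∈ D → π z 1 = π x 1} ∈ 𝓝 x := by
    have := ((continuous_apply 1).continuousAt.comp_continuousWithinAt (hπ x hx))
      (isOpen_discrete {π x 1} |>.mem_nhds rfl)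
    exact mem_nhdsWithin_iff_eventually.1 this
  obtain ⟨W, hW⟩ := exists_finset_cylinder_subset hloc
  exact ⟨W, fun z hz hzW => hW z hzW hz⟩

lemma apply_one_eq_of_infinite_mapStab [Countable Γ] [Infinite Γ] [Countable A] [Nontrivial A]
    [DiscreteTopology A] [TopologicalSpace B] [DiscreteTopology B]
    {π : (Γ → A) → (Γ → B)} (hcont : ContinuousOn π (freePart Γ A))
    (hequiv : EquivariantOn π (freePart Γ A)) (hinf : (mapStab π (freePart Γ A)).Infinite)
    {x y : Γ → A} (hx : x ∈ freePart Γ A) (hy : y ∈ freePart Γ A) : π x 1 = π y 1 := by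
  classical
  obtain ⟨Wx, hWx⟩ := hcont.exists_finset_apply_one_eq hx
  obtain ⟨Wy, hWy⟩ := hcont.exists_finset_apply_one_eq hy
  obtain ⟨γ, hγ, hγW⟩ := hinf.exists_notMem_finset (Wy⁻¹ * Wx)
  have hdisj : ∀ δ ∈ Wy, δ * γ ∉ Wx := fun δ hδ h =>
    hγW (Finset.mem_mul.2 ⟨δ⁻¹, Finset.inv_mem_inv hδ, δ * γ, h, by group⟩)
  obtain ⟨z, hz, hzW⟩ := exists_mem_freePart_forall_eq (Wx ∪ Wy.image (· * γ))
    fun δ => if δ ∈ Wx then x δ else y (δ * γ⁻¹)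
  calc π x 1 = π z 1 := by
        refine (hWx z hz fun δ hδ => ?_).symm
        simp [hzW δ (Finset.mem_union_left _ hδ), hδ]
    _ = π (shiftAct γ z) 1 := by rw [hequiv z hz γ, hγ z hz]
    _ = π y 1 := by
        refine hWy _ (shiftAct_mem_freePart hz γ) fun δ hδ => ?_
        have hδγ : δ * γ ∈ Wx ∪ Wy.image (· * γ) :=
          Finset.mem_union_right _ (Finset.mem_image_of_mem _ hδ)
        simp [shiftAct, hzW _ hδγ, hdisj δ hδ]

lemma eq_of_infinite_mapStab [Countable Γ] [Infinite Γ] [Countable A] [Nontrivial A]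
    [DiscreteTopology A] [TopologicalSpace B] [DiscreteTopology B]
    {π : (Γ → A) → (Γ → B)} (hcont : ContinuousOn π (freePart Γ A))
    (hequiv : EquivariantOn π (freePart Γ A)) (hinf : (mapStab π (freePart Γ A)).Infinite)
    {x y : Γ → A} (hx : x ∈ freePart Γ A) (hy : y ∈ freePart Γ A) : π x = π y := by
  funext δ
  rw [← shiftAct_apply_one δ (π x), ← shiftAct_apply_one δ (π y), ← hequiv x hx δ,
    ← hequiv y hy δ]
  exact apply_one_eq_of_infinite_mapStab hcont hequiv hinf (shiftAct_mem_freePart hx δ)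
    (shiftAct_mem_freePart hy δ)

end FreePart

theorem stmt2_general {Γ : Type} [Group Γ] [Countable Γ] [Infinite Γ]
    (k ℓ : ℕ)
    (π : (Γ → Fin k) → (Γ → Fin ℓ))
    (hπcont : ContinuousOn π (freePart Γ (Fin k)))
    (hπequiv : EquivariantOn π (freePart Γ (Fin k))) :
    ((∀ x ∈ freePart Γ (Fin k), ∀ y ∈ freePart Γ (Fin k), π x = π y) ∧
      mapStab π (freePart Γ (Fin k)) = Set.univ) ∨
    (∃ H : Subgroup Γ, H.Normal ∧ (H : Set Γ).Finite ∧
      (H : Set Γ) = mapStab π (freePart Γ (Fin k))) := by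
  by_cases hfin : (mapStab π (freePart Γ (Fin k))).Finite
  · exact Or.inr ⟨mapStabSubgroup π _, mapStabSubgroup_normal hπequiv, hfin, rfl⟩
  · have hconst : ∀ x ∈ freePart Γ (Fin k), ∀ y ∈ freePart Γ (Fin k), π x = π y := by
      rcases subsingleton_or_nontrivial (Fin k) with _ | _
      · simp [freePart_eq_empty]
      · exact fun x hx y hy => eq_of_infinite_mapStab hπcont hπequiv hfin hx hy
    exact Or.inl ⟨hconst, mapStab_eq_univ_of_forall_eq hπequiv hconst⟩

/-- Proposition `Stab`.  Let `k, ℓ ≥ 1` and let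
`π : Free(k^Γ) → ℓ^Γ` be a continuous `Γ`-equivariant map.  Then either `π` is
constant and `Stab(π) = Γ`, or else `Stab(π)` is a finite normal subgroup of `Γ`. -/
theorem stmt2 {Γ : Type} [Group Γ] [Countable Γ] [Infinite Γ]
    (k ℓ : ℕ) (hk : 1 ≤ k) (hℓ : 1 ≤ ℓ)
    (π : (Γ → Fin k) → (Γ → Fin ℓ))
    (hπcont : ContinuousOn π (freePart Γ (Fin k)))
    (hπequiv : EquivariantOn π (freePart Γ (Fin k))) :
    ((∀ x ∈ freePart Γ (Fin k), ∀ y ∈ freePart Γ (Fin k), π x = π y) ∧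
      mapStab π (freePart Γ (Fin k)) = Set.univ) ∨
    (∃ H : Subgroup Γ, H.Normal ∧ (H : Set Γ).Finite ∧
      (H : Set Γ) = mapStab π (freePart Γ (Fin k))) :=
  stmt2_general k ℓ π hπcont hπequiv
end

section
/- Let Γ be a countably infinite group. For every finite normal subgroup H ⊲ Γ and every integer k ≥ 2, there is a continuous Γ-equivariant map π : Free(k^Γ) → X_H such that Stab(π) = H, where X_H ⊆ 2^Γ is the set of all functions x : Γ → 2 that are constant on the cosets of H. -/
open scoped Pointwise
/-- Proposition `Stab_conv`.  For every finite normal subgroup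
`H ⊲ Γ` and every `k ≥ 2`, there is a continuous `Γ`-equivariant map
`π : Free(k^Γ) → X_H` with `Stab(π) = H`, where `X_H ⊆ 2^Γ` is the set of functions
`x : Γ → 2` constant on the cosets of `H`. -/
theorem stmt3 {Γ : Type} [Group Γ] [Countable Γ] [Infinite Γ]
    (H : Subgroup Γ) (hHnorm : H.Normal) (hHfin : (H : Set Γ).Finite)
    (k : ℕ) (hk : 2 ≤ k) :
    ∃ π : (Γ → Fin k) → (Γ → Fin 2),
      ContinuousOn π (freePart Γ (Fin k)) ∧
      EquivariantOn π (freePart Γ (Fin k)) ∧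
      (∀ x ∈ freePart Γ (Fin k), π x ∈
        {y : Γ → Fin 2 | ∀ γ : Γ, ∀ h ∈ H, y (h * γ) = y γ}) ∧
      mapStab π (freePart Γ (Fin k)) = (H : Set Γ) := by
  classical
  haveI : NeZero k := ⟨by omega⟩
  have hone : (1 : Fin k) ≠ 0 := by
    intro h
    have := congrArg Fin.val h
    rw [Fin.val_one', Fin.val_zero, Nat.mod_eq_of_lt (by omega)] at this
    exact one_ne_zero this
  set P : (Γ → Fin k) → Γ → Prop :=
    fun x γ => (∀ h ∈ (H : Set Γ), x (h * γ) = x γ) ∧ x γ = 0 with hP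
  set π : (Γ → Fin k) → (Γ → Fin 2) := fun x γ => if P x γ then 1 else 0 with hπ
  -- invariance of P under left multiplication by elements of H
  have L : ∀ (x : Γ → Fin k) (γ h' : Γ), h' ∈ H → P x γ → P x (h' * γ) := by
    rintro x γ h' hh' ⟨hc, h0⟩
    have hx : x (h' * γ) = 0 := by rw [hc h' hh']; exact h0
    refine ⟨fun g hg => ?_, hx⟩
    rw [← mul_assoc, hc (g * h') (mul_mem hg hh'), hx, h0]
  have Liff : ∀ (x : Γ → Fin k) (γ h' : Γ), h' ∈ H → (P x (h' * γ) ↔ P x γ) := by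
    intro x γ h' hh'
    constructor
    · intro hp
      have := L x (h' * γ) h'⁻¹ (inv_mem hh') hp
      rwa [inv_mul_cancel_left] at this
    · exact L x γ h' hh'
  have hπinv : ∀ (x : Γ → Fin k) (γ h' : Γ), h' ∈ H → π x (h' * γ) = π x γ := by
    intro x γ h' hh'
    simp only [hπ]
    exact if_congr (Liff x γ h' hh') rfl rfl
  refine ⟨π, ?_, ?_, ?_, ?_⟩
  · -- continuity
    refine Continuous.continuousOn ?_
    refine continuous_pi fun γ => ?_
    have hclopen : IsClopen {x : Γ → Fin k | P x γ} := by
      have h1 : {x : Γ → Fin k | P x γ} =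
          (⋂ h ∈ (H : Set Γ), {x : Γ → Fin k | x (h * γ) = x γ}) ∩ {x | x γ = 0} := by
        ext x
        simp [hP, Set.mem_iInter₂]
      rw [h1]
      refine IsClopen.inter ?_ ?_
      · refine hHfin.isClopen_biInter fun h _ => ?_
        have : {x : Γ → Fin k | x (h * γ) = x γ} =
            (fun x : Γ → Fin k => (x (h * γ), x γ)) ⁻¹' {p | p.1 = p.2} := rfl
        rw [this]
        exact (isClopen_discrete _).preimage ((continuous_apply _).prodMk (continuous_apply _))
      · have : {x : Γ → Fin k | x γ = 0} = (fun x : Γ → Fin k => x γ) ⁻¹' {0} := rfl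
        rw [this]
        exact (isClopen_discrete _).preimage (continuous_apply _)
    refine Continuous.if ?_ continuous_const continuous_const
    intro a ha
    rw [hclopen.frontier_eq] at ha
    exact absurd ha (Set.notMem_empty a)
  · -- equivariance
    intro x _ σ
    funext γ
    simp only [hπ, hP, shiftAct, mul_assoc]
  · -- image in X_H
    intro x _ γ h hh
    exact hπinv x γ h hh
  · -- mapStab = H
    ext γ
    constructor
    · intro hγ
      by_contra hγH
      set x : Γ → Fin k := fun δ => if δ = γ then 1 else 0 with hx
      have hxfree : x ∈ freePart Γ (Fin k) := by
        intro σ hσ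
        have := congrFun hσ (γ * σ⁻¹)
        simp only [shiftAct, inv_mul_cancel_right, hx] at this
        by_contra hσ1
        have h2 : γ * σ⁻¹ ≠ γ := by
          intro h
          apply hσ1
          have h3 : γ * σ⁻¹ = γ * 1 := by rw [mul_one]; exact h
          exact inv_eq_one.mp (mul_left_cancel h3)
        simp only [if_true, if_neg h2] at this
        exact hone this
      have := congrFun (hγ x hxfree) 1
      simp only [shiftAct, one_mul] at this
      -- this : π x γ = π x 1
      have hP1 : P x 1 := by
        constructor
        · intro h hh
          have h1 : h * 1 ≠ γ := by simp; intro he; exact hγH (he ▸ hh)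
          have h2 : (1 : Γ) ≠ γ := fun he => hγH (he ▸ H.one_mem)
          simp only [hx, if_neg h1, if_neg h2]
        · simp only [hx, if_neg (fun he : (1:Γ) = γ => hγH (he ▸ H.one_mem))]
      have hPγ : ¬ P x γ := by
        rintro ⟨-, h0⟩
        simp only [hx, if_pos rfl] at h0
        exact hone h0
      simp only [hπ, if_pos hP1, if_neg hPγ] at this
      exact absurd this (by decide)
    · intro hγ x _
      funext δ
      show π x (δ * γ) = π x δ
      have hc : δ * γ * δ⁻¹ ∈ H := hHnorm.conj_mem γ hγ δ
      have := hπinv x δ (δ * γ * δ⁻¹) hc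
      rwa [inv_mul_cancel_right] at this
end

section
/- Let Γ be a countably infinite group, F ⊂ Γ a finite symmetric set with 1 ∉ F, ℓ ≥ |F| + 1 and m ≥ 1 integers, and ρ : Col(F, ℓ) → m a non-constant function. Suppose W ⊂ Γ is a finite symmetric set with 1 ∈ W such that ρ(x) is determined by the restriction of x to W, i.e., there is τ : Col(F, ℓ, W) → m with ρ(x) = τ(x|_W) for all x ∈ Col(F, ℓ), where Col(F, ℓ, W) is the set of proper ℓ-colorings of the subgraph of the Cayley graph G(Γ,F) induced by W. Then the subgroup H := {h ∈ Γ : ρ(x) = ρ(h·x) for all x ∈ Col(F, ℓ)} satisfies H ⊆ W² ∪ WFW; in particular, H is finite. -/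
open scoped Pointwise
noncomputable def pickAvoid {ℓ : ℕ} (hℓ : 0 < ℓ) (s : Finset (Fin ℓ)) : Fin ℓ :=
  if h : sᶜ.Nonempty then h.choose else ⟨0, hℓ⟩

lemma pickAvoid_not_mem {ℓ : ℕ} (hℓ : 0 < ℓ) {s : Finset (Fin ℓ)} (hs : s.card < ℓ) :
    pickAvoid hℓ s ∉ s := by
  have h : sᶜ.Nonempty := by
    rw [← Finset.card_pos, Finset.card_compl, Fintype.card_fin]; omega
  rw [pickAvoid, dif_pos h]
  simpa using h.choose_spec

noncomputable def greedy {Γ : Type} [Group Γ] [DecidableEq Γ] (F S : Finset Γ) {ℓ : ℕ}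
    (hℓ : 0 < ℓ) (c : Γ → Fin ℓ) (e : Γ ≃ ℕ) : ℕ → Fin ℓ
  | n =>
    if e.symm n ∈ S then c (e.symm n)
    else pickAvoid hℓ (F.image fun σ =>
      if σ * e.symm n ∈ S then c (σ * e.symm n)
      else if h : e (σ * e.symm n) < n then greedy F S hℓ c e (e (σ * e.symm n))
      else ⟨0, hℓ⟩)
  termination_by n => n
  decreasing_by exact h

lemma greedy_eq_of_mem {Γ : Type} [Group Γ] [DecidableEq Γ] (F S : Finset Γ) {ℓ : ℕ}
    (hℓ : 0 < ℓ) (c : Γ → Fin ℓ) (e : Γ ≃ ℕ) {γ : Γ} (hγ : γ ∈ S) :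
    greedy F S hℓ c e (e γ) = c γ := by
  rw [greedy]
  simp [hγ]

lemma greedy_step {Γ : Type} [Group Γ] [DecidableEq Γ] (F S : Finset Γ) {ℓ : ℕ}
    (hℓ : 0 < ℓ) (c : Γ → Fin ℓ) (e : Γ ≃ ℕ) (hcard : F.card < ℓ)
    {γ : Γ} (hγ : γ ∉ S) {σ : Γ} (hσ : σ ∈ F)
    (hlt : σ * γ ∈ S ∨ e (σ * γ) < e γ) :
    greedy F S hℓ c e (e γ) ≠ greedy F S hℓ c e (e (σ * γ)) := by
  have hmem : greedy F S hℓ c e (e (σ * γ)) ∈ F.image (fun σ' =>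
      if σ' * γ ∈ S then c (σ' * γ)
      else if _ : e (σ' * γ) < e γ then greedy F S hℓ c e (e (σ' * γ))
      else ⟨0, hℓ⟩) := by
    refine Finset.mem_image.2 ⟨σ, hσ, ?_⟩
    by_cases hs : σ * γ ∈ S
    · rw [if_pos hs, greedy_eq_of_mem F S hℓ c e hs]
    · rw [if_neg hs, dif_pos (hlt.resolve_left hs)]
  intro hEq
  have hnot := pickAvoid_not_mem hℓ (lt_of_le_of_lt Finset.card_image_le hcard)
    (s := F.image (fun σ' =>
      if σ' * γ ∈ S then c (σ' * γ)
      else if _ : e (σ' * γ) < e γ then greedy F S hℓ c e (e (σ' * γ))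
      else ⟨0, hℓ⟩))
  apply hnot
  rw [← hEq] at hmem
  have hun : greedy F S hℓ c e (e γ) = pickAvoid hℓ (F.image fun σ' =>
      if σ' * γ ∈ S then c (σ' * γ)
      else if _ : e (σ' * γ) < e γ then greedy F S hℓ c e (e (σ' * γ))
      else ⟨0, hℓ⟩) := by
    rw [greedy]
    simp only [Equiv.symm_apply_apply]
    rw [if_neg hγ]
  rwa [hun] at hmem

lemma greedy_proper {Γ : Type} [Group Γ] [DecidableEq Γ] (F S : Finset Γ) {ℓ : ℕ}
    (hℓ : 0 < ℓ) (c : Γ → Fin ℓ) (e : Γ ≃ ℕ) (hF1 : (1 : Γ) ∉ F)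
    (hFsym : ∀ σ ∈ F, σ⁻¹ ∈ F) (hcard : F.card < ℓ)
    (hc : ∀ γ ∈ S, ∀ σ ∈ F, σ * γ ∈ S → c γ ≠ c (σ * γ)) :
    ∀ γ : Γ, ∀ σ ∈ F, greedy F S hℓ c e (e γ) ≠ greedy F S hℓ c e (e (σ * γ)) := by
  intro γ σ hσ
  have hne : γ ≠ σ * γ := by
    intro h
    exact hF1 (by rwa [show σ = 1 from
      mul_right_cancel (a := σ) (b := γ) (c := (1:Γ)) (by rw [one_mul, ← h])] at hσ)
  have hσ' : σ⁻¹ ∈ F := hFsym σ hσ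
  have hcan : σ⁻¹ * (σ * γ) = γ := by group
  by_cases hγ : γ ∈ S <;> by_cases hδ : σ * γ ∈ S
  · rw [greedy_eq_of_mem F S hℓ c e hγ, greedy_eq_of_mem F S hℓ c e hδ]
    exact hc γ hγ σ hσ hδ
  · have := greedy_step F S hℓ c e hcard hδ hσ' (Or.inl (by rwa [hcan]))
    rw [hcan] at this
    exact this.symm
  · exact greedy_step F S hℓ c e hcard hγ hσ (Or.inl hδ)
  · have hEne : e γ ≠ e (σ * γ) := fun h => hne (e.injective h)
    rcases lt_or_gt_of_ne hEne with h1 | h1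
    · have := greedy_step F S hℓ c e hcard hδ hσ' (Or.inr (by rwa [hcan]))
      rw [hcan] at this
      exact this.symm
    · exact greedy_step F S hℓ c e hcard hγ hσ (Or.inr h1)

lemma shift_properCol {Γ : Type} [Group Γ] {F : Finset Γ} {ℓ : ℕ} {x : Γ → Fin ℓ}
    (hx : x ∈ properCol F ℓ) (g : Γ) : shiftAct g x ∈ properCol F ℓ := by
  intro γ σ hσ
  have := hx (γ * g) σ hσ
  simpa [shiftAct, mul_assoc] using this

/-- Let `F ⊂ Γ` be a finite symmetric set with `1 ∉ F`,
`ℓ ≥ |F| + 1`, `m ≥ 1`, and let `ρ : Col(F, ℓ) → m` be non-constant.  Suppose `W ⊂ Γ`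
is a finite symmetric set with `1 ∈ W` such that `ρ(x)` is determined by the
restriction of `x` to `W`.  Then the subgroup
`H = {h : ρ(x) = ρ(h·x) for all x ∈ Col(F, ℓ)}` satisfies `H ⊆ W² ∪ WFW`;
in particular `H` is finite. -/
theorem stmt15 {Γ : Type} [Group Γ] [Countable Γ] [Infinite Γ] [DecidableEq Γ]
    (F : Finset Γ) (hFsym : ∀ σ ∈ F, σ⁻¹ ∈ F) (hF1 : (1 : Γ) ∉ F)
    (ℓ m : ℕ) (hℓ : F.card + 1 ≤ ℓ) (hm : 1 ≤ m)
    (ρ : (Γ → Fin ℓ) → Fin m)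
    (hρnc : ∃ x ∈ properCol F ℓ, ∃ y ∈ properCol F ℓ, ρ x ≠ ρ y)
    (W : Finset Γ) (hWsym : ∀ w ∈ W, w⁻¹ ∈ W) (hW1 : (1 : Γ) ∈ W)
    (hdet : ∀ x ∈ properCol F ℓ, ∀ y ∈ properCol F ℓ,
      (∀ w ∈ W, x w = y w) → ρ x = ρ y) :
    {h : Γ | ∀ x ∈ properCol F ℓ, ρ x = ρ (shiftAct h x)} ⊆ ↑(W * W ∪ W * F * W) ∧
    Set.Finite {h : Γ | ∀ x ∈ properCol F ℓ, ρ x = ρ (shiftAct h x)} := by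
  have hsub : {h : Γ | ∀ x ∈ properCol F ℓ, ρ x = ρ (shiftAct h x)} ⊆
      ↑(W * W ∪ W * F * W) := by
    intro h hh
    by_contra hnot
    obtain ⟨x, hx, y, hy, hxy⟩ := hρnc
    have hW2 : h ∉ W * W := fun hmem =>
      hnot (Finset.mem_coe.2 (Finset.mem_union_left _ hmem))
    have hWFW : h ∉ W * F * W := fun hmem =>
      hnot (Finset.mem_coe.2 (Finset.mem_union_right _ hmem))
    have hℓ0 : 0 < ℓ := by omega
    obtain ⟨e⟩ : Nonempty (Γ ≃ ℕ) := nonempty_equiv_of_countable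
    have hdisj : ∀ w ∈ W, w * h ∉ W := by
      intro w hw hmem
      apply hW2
      have heq : h = w⁻¹ * (w * h) := by group
      rw [heq]
      exact Finset.mul_mem_mul (hWsym w hw) hmem
    have hedge1 : ∀ w ∈ W, ∀ w' ∈ W, ∀ σ ∈ F, σ * w ≠ w' * h := by
      intro w hw w' hw' σ hσ hEq
      apply hWFW
      have heq : h = (w'⁻¹ * σ) * w := by rw [mul_assoc, hEq]; group
      rw [heq]
      exact Finset.mul_mem_mul (Finset.mul_mem_mul (hWsym w' hw') hσ) hw
    have hedge2 : ∀ w ∈ W, ∀ w' ∈ W, ∀ σ ∈ F, σ * (w * h) ≠ w' := by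
      intro w hw w' hw' σ hσ hEq
      apply hedge1 w' hw' w hw σ⁻¹ (hFsym σ hσ)
      rw [← hEq]; group
    set S : Finset Γ := W ∪ W.image (· * h) with hS
    set c : Γ → Fin ℓ := fun γ => if γ ∈ W then x γ else y (γ * h⁻¹) with hc_def
    have hmemS : ∀ γ, γ ∈ S ↔ γ ∈ W ∨ ∃ w ∈ W, w * h = γ := by
      intro γ
      rw [hS, Finset.mem_union, Finset.mem_image]
    have hcW : ∀ w ∈ W, c w = x w := fun w hw => if_pos hw
    have hcWh : ∀ w ∈ W, c (w * h) = y w := by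
      intro w hw
      rw [hc_def]
      simp only
      rw [if_neg (hdisj w hw)]
      congr 1
      group
    have hcprop : ∀ γ ∈ S, ∀ σ ∈ F, σ * γ ∈ S → c γ ≠ c (σ * γ) := by
      intro γ hγ σ hσ hδ
      rcases (hmemS γ).1 hγ with hγW | ⟨w, hw, rfl⟩
      · rcases (hmemS _).1 hδ with hδW | ⟨w', hw', hEq⟩
        · rw [hcW γ hγW, hcW _ hδW]
          exact hx γ σ hσ
        · exact absurd hEq.symm (hedge1 γ hγW w' hw' σ hσ)
      · rcases (hmemS _).1 hδ with hδW | ⟨w', hw', hEq⟩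
        · exact absurd rfl (hedge2 w hw _ hδW σ hσ)
        · rw [hcWh w hw, ← hEq, hcWh w' hw']
          have hww' : w' = σ * w := by
            apply mul_right_cancel (b := h)
            rw [hEq, mul_assoc]
          rw [hww']
          exact hy w σ hσ
    set z : Γ → Fin ℓ := fun γ => greedy F S hℓ0 c e (e γ) with hz_def
    have hz : z ∈ properCol F ℓ := fun γ σ hσ =>
      greedy_proper F S hℓ0 c e hF1 hFsym (by omega) hcprop γ σ hσ
    have hzx : ρ z = ρ x := by
      apply hdet z hz x hx
      intro w hw
      have hwS : w ∈ S := (hmemS w).2 (Or.inl hw)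
      show greedy F S hℓ0 c e (e w) = x w
      rw [greedy_eq_of_mem F S hℓ0 c e hwS, hcW w hw]
    have hzy : ρ (shiftAct h z) = ρ y := by
      apply hdet _ (shift_properCol hz h) y hy
      intro w hw
      have hwS : w * h ∈ S := (hmemS _).2 (Or.inr ⟨w, hw, rfl⟩)
      show greedy F S hℓ0 c e (e (w * h)) = y w
      rw [greedy_eq_of_mem F S hℓ0 c e hwS, hcWh w hw]
    have hfin := hh z hz
    rw [hzx, hzy] at hfin
    exact hxy hfin
  exact ⟨hsub, Set.Finite.subset (Finset.finite_toSet _) hsub⟩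
end
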